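/- The companion poly-Bernoulli polynomials satisfy: for any positive integer m, C_n^{(k)}(z+m) - C_n^{(k)}(z) = ∑_{l=1}^n C(n,l) C_{l-1}^{(k-1)} · (B_{n-l+1}(m+z) - B_{n-l+1}(z))/(n-l+1), for k ≥ 2 and n ≥ 1. -/

import Mathlib

/-- Generating function `Li_k(1-e^{-t})/(1-e^{-t})` of the poly-Bernoulli numbers,
as a formal power series over `ℚ` (coefficientwise: `∑_{m≥1} (1-e^{-t})^{m-1}/m^k`). -/
noncomputable def pbGF (k : ℕ) : PowerSeries ℚ :=
  PowerSeries.mk fun n => ∑ m ∈ Finset.range (n + 1),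
    ((m + 1 : ℚ) ^ k)⁻¹ *
      PowerSeries.coeff n ((1 - PowerSeries.rescale (-1) (PowerSeries.exp ℚ)) ^ m)

/-- Poly-Bernoulli numbers `B_n^{(k)}`. -/
noncomputable def polyBernoulliNum (k n : ℕ) : ℚ :=
  (Nat.factorial n : ℚ) * PowerSeries.coeff n (pbGF k)

/-- Generating function `Li_k(1-e^{-t})/(e^t-1) = e^{-t}·Li_k(1-e^{-t})/(1-e^{-t})`. -/
noncomputable def cGF (k : ℕ) : PowerSeries ℚ :=
  PowerSeries.rescale (-1) (PowerSeries.exp ℚ) * pbGF k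

/-- Companion poly-Bernoulli numbers `C_n^{(k)}`. -/
noncomputable def polyCNum (k n : ℕ) : ℚ :=
  (Nat.factorial n : ℚ) * PowerSeries.coeff n (cGF k)

/-- Poly-Bernoulli polynomials `B_n^{(k)}(z)` (EGF `e^{zt}·Li_k(1-e^{-t})/(1-e^{-t})`). -/
noncomputable def polyBernoulliPoly (k n : ℕ) (z : ℚ) : ℚ :=
  ∑ j ∈ Finset.range (n + 1), (n.choose j : ℚ) * polyBernoulliNum k j * z ^ (n - j)

/-- Companion poly-Bernoulli polynomials `C_n^{(k)}(z)` (EGF `e^{zt}·Li_k(1-e^{-t})/(e^t-1)`). -/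
noncomputable def polyCPoly (k n : ℕ) (z : ℚ) : ℚ :=
  ∑ j ∈ Finset.range (n + 1), (n.choose j : ℚ) * polyCNum k j * z ^ (n - j)

open PowerSeries Finset

/-- `e^{-t}` as a power series. -/
noncomputable def pbE : ℚ⟦X⟧ := PowerSeries.rescale (-1) (PowerSeries.exp ℚ)

/-- `1 - e^{-t}` as a power series. -/
noncomputable def pbU : ℚ⟦X⟧ := 1 - pbE

lemma coeff_pbE (n : ℕ) : PowerSeries.coeff n pbE = (-1) ^ n / n.factorial := by
  rw [pbE, PowerSeries.coeff_rescale, PowerSeries.coeff_exp]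
  simp [div_eq_mul_inv]

lemma constantCoeff_pbU : PowerSeries.constantCoeff pbU = 0 := by
  have h := coeff_pbE 0
  rw [PowerSeries.coeff_zero_eq_constantCoeff] at h
  simp [pbU, h]

lemma coeff_pow_eq_zero {f : ℚ⟦X⟧} (hf : PowerSeries.constantCoeff f = 0)
    {n m : ℕ} (h : n < m) : PowerSeries.coeff n (f ^ m) = 0 := by
  induction m generalizing n with
  | zero => omega
  | succ m ih =>
    rw [pow_succ, PowerSeries.coeff_mul]
    apply Finset.sum_eq_zero
    rintro ⟨i, j⟩ hij
    rw [Finset.HasAntidiagonal.mem_antidiagonal] at hij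
    rcases lt_or_ge i m with hi | hi
    · rw [ih hi, zero_mul]
    · have hj : j = 0 := by omega
      subst hj
      rw [PowerSeries.coeff_zero_eq_constantCoeff, hf, mul_zero]

/-- Truncation of `pbGF`. -/
noncomputable def pbT (k N : ℕ) : ℚ⟦X⟧ :=
  ∑ m ∈ Finset.range (N + 1), PowerSeries.C (((m + 1 : ℚ) ^ k)⁻¹) * pbU ^ m

lemma coeff_pbT (k N j : ℕ) :
    PowerSeries.coeff j (pbT k N) =
      ∑ m ∈ Finset.range (N + 1), ((m + 1 : ℚ) ^ k)⁻¹ * PowerSeries.coeff j (pbU ^ m) := by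
  simp [pbT, PowerSeries.coeff_C_mul]

lemma coeff_pbGF_eq_pbT (k : ℕ) {j N : ℕ} (h : j ≤ N) :
    PowerSeries.coeff j (pbGF k) = PowerSeries.coeff j (pbT k N) := by
  rw [pbGF, PowerSeries.coeff_mk, coeff_pbT]
  apply Finset.sum_subset
  · intro x hx
    simp only [Finset.mem_range] at *
    omega
  · intro m _ hm'
    simp only [Finset.mem_range, not_lt] at hm'
    have he : (1 - PowerSeries.rescale (-1) (PowerSeries.exp ℚ)) ^ m = pbU ^ m := rfl
    rw [he, coeff_pow_eq_zero constantCoeff_pbU (show j < m by omega), mul_zero]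

lemma coeff_mul_congr {f g g' : ℚ⟦X⟧} {N : ℕ}
    (h : ∀ j ≤ N, PowerSeries.coeff j g = PowerSeries.coeff j g') :
    PowerSeries.coeff N (f * g) = PowerSeries.coeff N (f * g') := by
  rw [PowerSeries.coeff_mul, PowerSeries.coeff_mul]
  apply Finset.sum_congr rfl
  rintro ⟨i, j⟩ hij
  rw [Finset.HasAntidiagonal.mem_antidiagonal] at hij
  rw [h j (by omega)]

lemma deriv_pbE : PowerSeries.derivativeFun pbE = -pbE := by
  ext n
  rw [show pbE.derivativeFun = (PowerSeries.derivative ℚ) pbE from rfl,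
    PowerSeries.coeff_derivativeFun, map_neg, coeff_pbE, coeff_pbE, Nat.factorial_succ]
  have h2 : ((n : ℚ) + 1) ≠ 0 := by positivity
  have h3 : ((n.factorial : ℚ)) ≠ 0 := by positivity
  push_cast
  field_simp
  ring

lemma deriv_pbU : PowerSeries.derivativeFun pbU = pbE := by
  have h1 : pbU = 1 - pbE := rfl
  rw [h1, sub_eq_add_neg, PowerSeries.derivativeFun_add, PowerSeries.derivativeFun_one,
    zero_add]
  have h2 : (-pbE : ℚ⟦X⟧) = (-1 : ℚ) • pbE := by simp
  rw [h2, PowerSeries.derivativeFun_smul, deriv_pbE]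
  simp

lemma deriv_pbU_pow (m : ℕ) :
    PowerSeries.derivativeFun (pbU ^ (m + 1)) =
      PowerSeries.C ((m : ℚ) + 1) * (pbE * pbU ^ m) := by
  have h := Derivation.leibniz_pow (PowerSeries.derivative (R := ℚ)) (a := pbU) (m + 1)
  rw [show (PowerSeries.derivative (R := ℚ)) pbU = PowerSeries.derivativeFun pbU from rfl,
    deriv_pbU] at h
  rw [show (PowerSeries.derivative (R := ℚ)) (pbU ^ (m + 1)) =
      PowerSeries.derivativeFun (pbU ^ (m + 1)) from rfl] at h
  simp only [Nat.add_sub_cancel] at h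
  rw [h, smul_eq_mul, nsmul_eq_mul, ← map_natCast (PowerSeries.C) (m + 1)]
  push_cast
  ring

/-- Per-term derivative identity. -/
lemma term_identity (m l : ℕ) :
    ((l : ℚ) + 1) * PowerSeries.coeff (l + 1) (pbU ^ (m + 1)) =
      ((m : ℚ) + 1) * PowerSeries.coeff l (pbE * pbU ^ m) := by
  have h := congrArg (PowerSeries.coeff l) (deriv_pbU_pow m)
  rw [show (pbU ^ (m + 1)).derivativeFun = (PowerSeries.derivative ℚ) (pbU ^ (m + 1)) from rfl,
    PowerSeries.coeff_derivativeFun, PowerSeries.coeff_C_mul] at h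
  push_cast at h
  linear_combination h

/-- Key derivative identity for the generating functions. -/
lemma keyGF (k l : ℕ) :
    ((l : ℚ) + 1) * PowerSeries.coeff (l + 1) (pbU * pbGF (k + 1)) =
      PowerSeries.coeff l (pbE * pbGF k) := by
  have hL : PowerSeries.coeff (l + 1) (pbU * pbGF (k + 1)) =
      PowerSeries.coeff (l + 1) (pbU * pbT (k + 1) (l + 1)) :=
    coeff_mul_congr fun j hj => coeff_pbGF_eq_pbT (k + 1) hj
  have hR : PowerSeries.coeff l (pbE * pbGF k) =
      PowerSeries.coeff l (pbE * pbT k (l + 1)) :=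
    coeff_mul_congr fun j hj => coeff_pbGF_eq_pbT k (by omega)
  rw [hL, hR]
  have hU : pbU * pbT (k + 1) (l + 1) =
      ∑ m ∈ Finset.range (l + 2), PowerSeries.C (((m + 1 : ℚ) ^ (k + 1))⁻¹) * pbU ^ (m + 1) := by
    rw [pbT, Finset.mul_sum]
    apply Finset.sum_congr rfl
    intro m _
    rw [pow_succ]
    ring
  have hE : pbE * pbT k (l + 1) =
      ∑ m ∈ Finset.range (l + 2), PowerSeries.C (((m + 1 : ℚ) ^ k)⁻¹) * (pbE * pbU ^ m) := by
    rw [pbT, Finset.mul_sum]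
    apply Finset.sum_congr rfl
    intro m _
    ring
  rw [hU, hE, map_sum, map_sum, Finset.mul_sum]
  apply Finset.sum_congr rfl
  intro m _
  rw [PowerSeries.coeff_C_mul, PowerSeries.coeff_C_mul]
  have hm1 : ((m : ℚ) + 1) ≠ 0 := by positivity
  have hc : (((m : ℚ) + 1) ^ (k + 1))⁻¹ * ((m : ℚ) + 1) = (((m : ℚ) + 1) ^ k)⁻¹ := by
    rw [pow_succ, mul_inv, mul_assoc, inv_mul_cancel₀ hm1, mul_one]
  linear_combination ((((m : ℚ) + 1) ^ (k + 1))⁻¹) * term_identity m l +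
    (PowerSeries.coeff l (pbE * pbU ^ m)) * hc

lemma exp_mul_pbE : PowerSeries.exp ℚ * pbE = 1 := by
  have h := PowerSeries.exp_mul_exp_neg_eq_one (A := ℚ)
  exact h

lemma U_eq (k : ℕ) : (PowerSeries.exp ℚ - 1) * cGF (k + 1) = pbU * pbGF (k + 1) := by
  rw [cGF, sub_mul, one_mul, ← mul_assoc]
  rw [show PowerSeries.rescale (-1) (PowerSeries.exp ℚ) = pbE from rfl]
  rw [exp_mul_pbE, one_mul, pbU, sub_mul, one_mul]

lemma fact_coeff_exp_mul (g : ℚ⟦X⟧) (N : ℕ) :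
    (N.factorial : ℚ) * PowerSeries.coeff N (PowerSeries.exp ℚ * g) =
      ∑ j ∈ Finset.range (N + 1), (N.choose j : ℚ) *
        ((j.factorial : ℚ) * PowerSeries.coeff j g) := by
  rw [PowerSeries.coeff_mul, Finset.Nat.sum_antidiagonal_eq_sum_range_succ_mk, Finset.mul_sum]
  apply Finset.sum_nbij' (fun i => N - i) (fun j => N - j)
  · intro a ha
    rw [Finset.mem_range] at ha ⊢
    omega
  · intro a ha
    rw [Finset.mem_range] at ha ⊢
    omega
  · intro a ha
    rw [Finset.mem_range] at ha
    omega
  · intro a ha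
    rw [Finset.mem_range] at ha
    omega
  · intro i hi
    rw [Finset.mem_range] at hi
    have hiN : i ≤ N := by omega
    dsimp only
    rw [PowerSeries.coeff_exp, Nat.choose_symm hiN]
    simp only [Algebra.algebraMap_self, RingHom.id_apply]
    have h3 : (N.choose i : ℚ) * (i.factorial : ℚ) * (((N - i).factorial : ℚ)) =
        (N.factorial : ℚ) := by
      rw_mod_cast [Nat.choose_mul_factorial_mul_factorial hiN]
    have h4 : (i.factorial : ℚ) ≠ 0 := by positivity
    have h5 : (N.factorial : ℚ) * (1 / (i.factorial : ℚ)) =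
        (N.choose i : ℚ) * (((N - i).factorial : ℚ)) := by
      rw [mul_one_div, div_eq_iff h4]
      linear_combination -h3
    linear_combination (PowerSeries.coeff (N - i) g) * h5

/-- The basic recurrence: `∑_{j<l+1} C(l+1,j) C_j^{(k+1)} = C_l^{(k)}`. -/
lemma C_sum (k l : ℕ) :
    ∑ j ∈ Finset.range (l + 1), ((l + 1).choose j : ℚ) * polyCNum (k + 1) j =
      polyCNum k l := by
  have key := keyGF k l
  have hU := U_eq k
  have h1 : polyCNum k l = (l.factorial : ℚ) * PowerSeries.coeff l (pbE * pbGF k) := rfl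
  have h2 : ((l + 1).factorial : ℚ) * PowerSeries.coeff (l + 1) (pbU * pbGF (k + 1)) =
      polyCNum k l := by
    rw [h1, ← key, Nat.factorial_succ]
    push_cast
    ring
  rw [← hU] at h2
  have h3 : PowerSeries.coeff (l + 1) ((PowerSeries.exp ℚ - 1) * cGF (k + 1)) =
      PowerSeries.coeff (l + 1) (PowerSeries.exp ℚ * cGF (k + 1)) -
        PowerSeries.coeff (l + 1) (cGF (k + 1)) := by
    rw [sub_mul, one_mul, map_sub]
  rw [h3, mul_sub] at h2
  have h4 := fact_coeff_exp_mul (cGF (k + 1)) (l + 1)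
  rw [h4] at h2
  have h5 : ∑ j ∈ Finset.range (l + 1 + 1), ((l + 1).choose j : ℚ) *
      ((j.factorial : ℚ) * PowerSeries.coeff j (cGF (k + 1))) =
      (∑ j ∈ Finset.range (l + 1), ((l + 1).choose j : ℚ) * polyCNum (k + 1) j) +
        ((l + 1).factorial : ℚ) * PowerSeries.coeff (l + 1) (cGF (k + 1)) := by
    rw [Finset.sum_range_succ, Nat.choose_self]
    simp [polyCNum]
  rw [h5] at h2
  linarith [h2]

lemma Icc_eq_filter (j n : ℕ) :
    Finset.Icc (j + 1) n = (Finset.Icc 1 n).filter (fun l => j < l) := by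
  ext l
  simp only [Finset.mem_Icc, Finset.mem_filter]
  omega

lemma range_eq_filter {l n : ℕ} (h : l ≤ n) :
    Finset.range l = (Finset.range (n + 1)).filter (fun j => j < l) := by
  ext j
  simp only [Finset.mem_range, Finset.mem_filter]
  omega

/-- One-step difference formula. -/
lemma step (k n : ℕ) (w : ℚ) :
    polyCPoly (k + 1) n (w + 1) - polyCPoly (k + 1) n w =
      ∑ l ∈ Finset.Icc 1 n, (n.choose l : ℚ) * polyCNum k (l - 1) * w ^ (n - l) := by
  simp only [polyCPoly]
  rw [← Finset.sum_sub_distrib]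
  have hLHS : ∀ j ∈ Finset.range (n + 1),
      (n.choose j : ℚ) * polyCNum (k + 1) j * (w + 1) ^ (n - j) -
        (n.choose j : ℚ) * polyCNum (k + 1) j * w ^ (n - j) =
      ∑ l ∈ Finset.Icc (j + 1) n,
        (n.choose j : ℚ) * polyCNum (k + 1) j * (((n - j).choose (n - l) : ℚ) * w ^ (n - l)) := by
    intro j hj
    rw [Finset.mem_range] at hj
    have hjn : j ≤ n := by omega
    have hpow : (w + 1) ^ (n - j) =
        ∑ i ∈ Finset.range (n - j + 1), ((n - j).choose i : ℚ) * w ^ i := by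
      rw [add_pow]
      apply Finset.sum_congr rfl
      intro i _
      ring
    have hsplit : (w + 1) ^ (n - j) - w ^ (n - j) =
        ∑ i ∈ Finset.range (n - j), ((n - j).choose i : ℚ) * w ^ i := by
      rw [hpow, Finset.sum_range_succ, Nat.choose_self]
      push_cast
      ring
    have hre : ∑ i ∈ Finset.range (n - j), ((n - j).choose i : ℚ) * w ^ i =
        ∑ l ∈ Finset.Icc (j + 1) n, ((n - j).choose (n - l) : ℚ) * w ^ (n - l) := by
      apply Finset.sum_nbij' (fun i => n - i) (fun l => n - l)
      · intro i hi; rw [Finset.mem_range] at hi; rw [Finset.mem_Icc]; omega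
      · intro l hl; rw [Finset.mem_Icc] at hl; rw [Finset.mem_range]; omega
      · intro i hi; rw [Finset.mem_range] at hi; omega
      · intro l hl; rw [Finset.mem_Icc] at hl; omega
      · intro i hi; rw [Finset.mem_range] at hi
        have he : n - (n - i) = i := by omega
        rw [he]
    rw [← mul_sub, hsplit, hre, Finset.mul_sum]
  rw [Finset.sum_congr rfl hLHS]
  have hswap : ∑ j ∈ Finset.range (n + 1), ∑ l ∈ Finset.Icc (j + 1) n,
      (n.choose j : ℚ) * polyCNum (k + 1) j * (((n - j).choose (n - l) : ℚ) * w ^ (n - l)) =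
      ∑ l ∈ Finset.Icc 1 n, ∑ j ∈ Finset.range l,
        (n.choose j : ℚ) * polyCNum (k + 1) j * (((n - j).choose (n - l) : ℚ) * w ^ (n - l)) := by
    have h1 : ∀ j ∈ Finset.range (n + 1), ∑ l ∈ Finset.Icc (j + 1) n,
        (n.choose j : ℚ) * polyCNum (k + 1) j * (((n - j).choose (n - l) : ℚ) * w ^ (n - l)) =
        ∑ l ∈ Finset.Icc 1 n, if j < l then
          (n.choose j : ℚ) * polyCNum (k + 1) j *
            (((n - j).choose (n - l) : ℚ) * w ^ (n - l)) else 0 := by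
      intro j _
      rw [Icc_eq_filter, Finset.sum_filter]
    rw [Finset.sum_congr rfl h1, Finset.sum_comm]
    apply Finset.sum_congr rfl
    intro l hl
    rw [Finset.mem_Icc] at hl
    rw [← Finset.sum_filter, ← range_eq_filter hl.2]
  rw [hswap]
  apply Finset.sum_congr rfl
  intro l hl
  rw [Finset.mem_Icc] at hl
  obtain ⟨hl1, hl2⟩ := hl
  have hch : ∀ j ∈ Finset.range l, (n.choose j : ℚ) * ((n - j).choose (n - l) : ℚ) =
      (n.choose l : ℚ) * (l.choose j : ℚ) := by
    intro j hj
    rw [Finset.mem_range] at hj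
    have h0 : n - j - (l - j) = n - l := by omega
    have h1 : (n - j).choose (n - l) = (n - j).choose (l - j) := by
      rw [← h0]
      exact Nat.choose_symm (by omega)
    rw_mod_cast [h1]
    rw_mod_cast [← Nat.choose_mul (n := n) (show j ≤ l by omega)]
  obtain ⟨l', rfl⟩ : ∃ l', l = l' + 1 := ⟨l - 1, by omega⟩
  have hC := C_sum k l'
  calc ∑ j ∈ Finset.range (l' + 1),
        (n.choose j : ℚ) * polyCNum (k + 1) j *
          (((n - j).choose (n - (l' + 1)) : ℚ) * w ^ (n - (l' + 1)))
      = ∑ j ∈ Finset.range (l' + 1),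
        (n.choose (l' + 1) : ℚ) * (((l' + 1).choose j : ℚ) * polyCNum (k + 1) j) *
          w ^ (n - (l' + 1)) := by
        apply Finset.sum_congr rfl
        intro j hj
        have h := hch j hj
        calc (n.choose j : ℚ) * polyCNum (k + 1) j *
              (((n - j).choose (n - (l' + 1)) : ℚ) * w ^ (n - (l' + 1)))
            = ((n.choose j : ℚ) * ((n - j).choose (n - (l' + 1)) : ℚ)) * polyCNum (k + 1) j *
                w ^ (n - (l' + 1)) := by ring
          _ = ((n.choose (l' + 1) : ℚ) * ((l' + 1).choose j : ℚ)) * polyCNum (k + 1) j *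
                w ^ (n - (l' + 1)) := by rw [h]
          _ = (n.choose (l' + 1) : ℚ) * (((l' + 1).choose j : ℚ) * polyCNum (k + 1) j) *
                w ^ (n - (l' + 1)) := by ring
    _ = (n.choose (l' + 1) : ℚ) * polyCNum k (l' + 1 - 1) * w ^ (n - (l' + 1)) := by
        rw [← Finset.sum_mul, ← Finset.mul_sum, hC]
        simp

/-- `m`-step difference formula. -/
lemma mstep (k n m : ℕ) (w : ℚ) :
    polyCPoly (k + 1) n (w + m) - polyCPoly (k + 1) n w =
      ∑ a ∈ Finset.range m, ∑ l ∈ Finset.Icc 1 n,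
        (n.choose l : ℚ) * polyCNum k (l - 1) * (w + a) ^ (n - l) := by
  induction m with
  | zero => simp
  | succ m ih =>
    have h1 : (w + ((m + 1 : ℕ) : ℚ)) = (w + (m : ℚ)) + 1 := by push_cast; ring
    rw [h1, Finset.sum_range_succ, ← ih]
    have h2 := step k n (w + (m : ℚ))
    push_cast
    push_cast at h2
    linarith [h2]

/-- Bernoulli telescoping. -/
lemma bern_sum (p m : ℕ) (z : ℚ) :
    Polynomial.eval ((m : ℚ) + z) (Polynomial.bernoulli (p + 1)) -
      Polynomial.eval z (Polynomial.bernoulli (p + 1)) =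
      ((p : ℚ) + 1) * ∑ a ∈ Finset.range m, (z + a) ^ p := by
  induction m with
  | zero => simp
  | succ m ih =>
    have h1 : ((m + 1 : ℕ) : ℚ) + z = 1 + ((m : ℚ) + z) := by push_cast; ring
    rw [h1, Polynomial.bernoulli_eval_one_add, Finset.sum_range_succ]
    have h2 : ((m : ℚ) + z) ^ (p + 1 - 1) = (z + (m : ℚ)) ^ p := by
      rw [Nat.add_sub_cancel]
      ring
    rw [h2]
    push_cast
    push_cast at ih
    linarith [ih]

/-- Higher-order difference identity: for `m ≥ 1`, `k ≥ 2`, `n ≥ 1`,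
`C_n^{(k)}(z+m) - C_n^{(k)}(z)
  = ∑_{l=1}^n C(n,l) C_{l-1}^{(k-1)}·(B_{n-l+1}(m+z) - B_{n-l+1}(z))/(n-l+1)`. -/
theorem polyCPoly_higher_difference (k : ℕ) (hk : 2 ≤ k) (n : ℕ) (hn : 1 ≤ n)
    (m : ℕ) (hm : 1 ≤ m) (z : ℚ) :
    polyCPoly k n (z + m) - polyCPoly k n z =
      ∑ l ∈ Finset.Icc 1 n, (n.choose l : ℚ) * polyCNum (k - 1) (l - 1) *
        ((Polynomial.eval ((m : ℚ) + z) (Polynomial.bernoulli (n - l + 1)) -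
          Polynomial.eval z (Polynomial.bernoulli (n - l + 1))) / ((n - l + 1 : ℕ) : ℚ)) := by
  obtain ⟨K, rfl⟩ : ∃ K, k = K + 1 := ⟨k - 1, by omega⟩
  have hK : K + 1 - 1 = K := by omega
  rw [hK]
  rw [mstep K n m z, Finset.sum_comm]
  apply Finset.sum_congr rfl
  intro l hl
  rw [Finset.mem_Icc] at hl
  have hb := bern_sum (n - l) m z
  have hne : ((n - l : ℕ) : ℚ) + 1 ≠ 0 := by positivity
  have hcast : ((n - l + 1 : ℕ) : ℚ) = ((n - l : ℕ) : ℚ) + 1 := by push_cast; ring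
  rw [hcast, hb, mul_div_cancel_left₀ _ hne, Finset.mul_sum]
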